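/- For every quaternionic n×n matrix M and every quaternion α, Sdet(αM) = Sdet(Mα) = |α|^{2n}·Sdet(M), where αM (resp. Mα) denotes the matrix with entries α·M_{rs} (resp. M_{rs}·α). -/

import Mathlib

open scoped Quaternion

/-- The simplex part of a quaternion `x = a + j·b`: the complex number `a = x₀ + x₁·i`. -/
noncomputable def qSimplex (x : ℍ[ℝ]) : ℂ := ⟨x.re, x.imI⟩

/-- The perplex part of a quaternion `x = a + j·b`: the complex number `b = x₂ − x₃·i`. -/
noncomputable def qPerplex (x : ℍ[ℝ]) : ℂ := ⟨x.imJ, -x.imK⟩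

/-- The simplex part of a quaternionic matrix. -/
noncomputable def matSimplex {α β : Type*} (M : Matrix α β ℍ[ℝ]) : Matrix α β ℂ :=
  Matrix.of fun r s => qSimplex (M r s)

/-- The perplex part of a quaternionic matrix. -/
noncomputable def matPerplex {α β : Type*} (M : Matrix α β ℍ[ℝ]) : Matrix α β ℂ :=
  Matrix.of fun r s => qPerplex (M r s)

/-- The complex-block representation `ψ(M) = [[Mˢ, −conj(Mᵖ)], [Mᵖ, conj(Mˢ)]]`
of a quaternionic matrix `M = Mˢ + j·Mᵖ`. -/
noncomputable def psi {α β : Type*} (M : Matrix α β ℍ[ℝ]) : Matrix (α ⊕ α) (β ⊕ β) ℂ :=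
  Matrix.fromBlocks (matSimplex M) (-(matPerplex M).map (starRingEnd ℂ))
    (matPerplex M) ((matSimplex M).map (starRingEnd ℂ))

/-- The Study determinant of a square quaternionic matrix: `Sdet(M) = det(ψ(M))`. -/
noncomputable def Sdet {α : Type*} [Fintype α] [DecidableEq α] (M : Matrix α α ℍ[ℝ]) : ℂ :=
  (psi M).det

/-! Write `α = a + j·b`. The representation `ψ` is multiplicative, `αM = diag(α)·M` and
`Mα = M·diag(α)`, so everything reduces to the scalar matrix `diag(α)`. Up to a reordering
of rows and columns, `ψ(diag(α))` is the Kronecker product of `[[a, -b̄], [b, ā]]` with the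
identity, and that `2 × 2` block has determinant `|a|² + |b|² = |α|²`. -/

open Matrix Kronecker

@[simp]
lemma qSimplex_zero : qSimplex 0 = 0 := by
  apply Complex.ext <;> simp [qSimplex]

@[simp]
lemma qPerplex_zero : qPerplex 0 = 0 := by
  apply Complex.ext <;> simp [qPerplex]

lemma qSimplex_add (x y : ℍ[ℝ]) : qSimplex (x + y) = qSimplex x + qSimplex y := by
  apply Complex.ext <;> simp [qSimplex]

lemma qPerplex_add (x y : ℍ[ℝ]) : qPerplex (x + y) = qPerplex x + qPerplex y := by
  apply Complex.ext <;> simp [qPerplex]; ring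

lemma qSimplex_mul (x y : ℍ[ℝ]) :
    qSimplex (x * y) = qSimplex x * qSimplex y - starRingEnd ℂ (qPerplex x) * qPerplex y := by
  apply Complex.ext <;> simp [qSimplex, qPerplex] <;> ring

lemma qPerplex_mul (x y : ℍ[ℝ]) :
    qPerplex (x * y) = starRingEnd ℂ (qSimplex x) * qPerplex y + qPerplex x * qSimplex y := by
  apply Complex.ext <;> simp [qSimplex, qPerplex] <;> ring

lemma sq_norm_eq_normSq_qSimplex_add_normSq_qPerplex (x : ℍ[ℝ]) :
    ‖x‖ ^ 2 = Complex.normSq (qSimplex x) + Complex.normSq (qPerplex x) := by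
  rw [sq, ← Quaternion.normSq_eq_norm_mul_self, Quaternion.normSq_def']
  simp [qSimplex, qPerplex, Complex.normSq_mk]
  ring

section

variable {l m n : Type*} [Fintype m]

lemma matSimplex_mul (A : Matrix l m ℍ[ℝ]) (B : Matrix m n ℍ[ℝ]) :
    matSimplex (A * B) =
      matSimplex A * matSimplex B - (matPerplex A).map (starRingEnd ℂ) * matPerplex B := by
  ext r s
  simp only [matSimplex, matPerplex, mul_apply, Matrix.sub_apply, of_apply,
    Matrix.map_apply, ← Finset.sum_sub_distrib, ← qSimplex_mul]
  exact map_sum (AddMonoidHom.mk' qSimplex qSimplex_add) _ _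

lemma matPerplex_mul (A : Matrix l m ℍ[ℝ]) (B : Matrix m n ℍ[ℝ]) :
    matPerplex (A * B) =
      (matSimplex A).map (starRingEnd ℂ) * matPerplex B + matPerplex A * matSimplex B := by
  ext r s
  simp only [matSimplex, matPerplex, mul_apply, Matrix.add_apply, of_apply,
    Matrix.map_apply, ← Finset.sum_add_distrib, ← qPerplex_mul]
  exact map_sum (AddMonoidHom.mk' qPerplex qPerplex_add) _ _

lemma psi_mul (A : Matrix l m ℍ[ℝ]) (B : Matrix m n ℍ[ℝ]) : psi (A * B) = psi A * psi B := by
  have conj_conj : (starRingEnd ℂ : ℂ → ℂ) ∘ starRingEnd ℂ = id := funext Complex.conj_conj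
  simp only [psi, fromBlocks_multiply, matSimplex_mul, matPerplex_mul,
    Matrix.map_sub _ (map_sub _), Matrix.map_add _ (map_add _), Matrix.map_mul, Matrix.map_map,
    conj_conj, Matrix.map_id]
  congr 1 <;> simp only [Matrix.mul_neg, Matrix.neg_mul, neg_add, sub_eq_add_neg, add_comm]

end

/-- `Fin 2 × ι ≃ ι ⊕ ι`, sending `(0, i)` to `inl i` and `(1, i)` to `inr i`. -/
def finTwoProdEquivSumSelf (ι : Type*) : Fin 2 × ι ≃ ι ⊕ ι :=
  (finTwoEquiv.prodCongr (Equiv.refl ι)).trans (Equiv.boolProdEquivSum ι)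

lemma psi_diagonal_const {ι : Type*} [DecidableEq ι] (q : ℍ[ℝ]) :
    psi (diagonal fun _ : ι => q) =
      reindex (finTwoProdEquivSumSelf ι) (finTwoProdEquivSumSelf ι)
        (!![qSimplex q, -starRingEnd ℂ (qPerplex q); qPerplex q, starRingEnd ℂ (qSimplex q)] ⊗ₖ
          (1 : Matrix ι ι ℂ)) := by
  ext (i | i) (j | j) <;> by_cases h : i = j <;>
    simp [psi, matSimplex, matPerplex, diagonal, finTwoProdEquivSumSelf, finTwoEquiv, h]

section

variable {ι : Type*} [Fintype ι] [DecidableEq ι]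

lemma sdet_mul (A B : Matrix ι ι ℍ[ℝ]) : Sdet (A * B) = Sdet A * Sdet B := by
  rw [Sdet, psi_mul, det_mul, Sdet, Sdet]

lemma sdet_diagonal_const (q : ℍ[ℝ]) :
    Sdet (diagonal fun _ : ι => q) = ((‖q‖ ^ (2 * Fintype.card ι) : ℝ) : ℂ) := by
  rw [Sdet, psi_diagonal_const, det_reindex_self, det_kronecker, det_one, one_pow, mul_one,
    det_fin_two_of, pow_mul, sq_norm_eq_normSq_qSimplex_add_normSq_qPerplex,
    neg_mul, sub_neg_eq_add, Complex.mul_conj, mul_comm, Complex.mul_conj]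
  norm_cast

end

theorem sdet_smul {n : ℕ} (M : Matrix (Fin n) (Fin n) ℍ[ℝ]) (α : ℍ[ℝ]) :
    Sdet (Matrix.of fun r s => α * M r s) = ((‖α‖ ^ (2 * n) : ℝ) : ℂ) * Sdet M ∧
    Sdet (Matrix.of fun r s => M r s * α) = ((‖α‖ ^ (2 * n) : ℝ) : ℂ) * Sdet M := by
  have hleft : (Matrix.of fun r s => α * M r s) = diagonal (fun _ => α) * M :=
    smul_eq_diagonal_mul M α
  have hright : (Matrix.of fun r s => M r s * α) = M * diagonal (fun _ => α) :=
    op_smul_eq_mul_diagonal M α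
  rw [hleft, hright, sdet_mul, sdet_mul, sdet_diagonal_const, Fintype.card_fin]
  exact ⟨rfl, mul_comm _ _⟩
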